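/- For every unit vector C ∈ ℝⁿ, the gradient of G_C at (I,J) = (0,0) equals (1, −C) ∈ ℝ × ℝⁿ, and the Hessian matrix of G_C at (0,0) (in the variables (I,J)) equals the (n+1)×(n+1) block matrix [[−11/12, Cᵀ],[C, Idₙ − 2CCᵀ]]. Consequently the Hessian has determinant −1/12, and the (n+2)×(n+2) bordered matrix formed from this Hessian and the gradient (1,−C) has determinant −1/12; in particular both are invertible. -/

import Mathlib

/-!
Writing `G_C(I, J) = P(I, ⟨C, J⟩, |J|²)` for a polynomial `P`, the gradient and the Hessian
follow from the chain rule; at the origin `|J|²` vanishes together with its derivative, so its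
only contribution to the Hessian is `P_b(0) · D²|J|² = ⟨·, ·⟩_J`.

No inverse matrix is needed for the determinants. The Householder reflection `1 - 2CCᵀ` maps `C`
to `-C`, so a column operation reduces the Hessian to a block-triangular matrix with diagonal
blocks `-11/12 + |C|² = 1/12` and `1 - 2CCᵀ`, of determinant `-1`. The Hessian maps `(0, C)` to
the gradient `(1, -C)`, so a column operation reduces the bordered matrix to a block-triangular
one with diagonal blocks `H` and `-⟨(1, -C), (0, C)⟩ = 1`.
-/

noncomputable section

/-- The normal form `G_C(I,J)` of the thermostated free particle, as a function on
`ℝ × ℝⁿ`. -/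
def Gc {n : ℕ} (C : Fin n → ℝ) (p : ℝ × (Fin n → ℝ)) : ℝ :=
  p.1 * (1 - (11 / 24) * p.1 + (∑ i, C i * p.2 i) + (3 / 2) * (∑ i, C i * p.2 i) ^ 2
        - (∑ i, p.2 i ^ 2) / 2)
    - (∑ i, C i * p.2 i) - (∑ i, C i * p.2 i) ^ 2 + (∑ i, p.2 i ^ 2) / 2
    + ((∑ i, p.2 i ^ 2) - (4 / 3) * (∑ i, C i * p.2 i) ^ 2) * (∑ i, C i * p.2 i)
    - (∑ i, p.2 i ^ 2) ^ 2 / 4 + 2 * (∑ i, C i * p.2 i) ^ 2 * (∑ i, p.2 i ^ 2)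
    - 2 * (∑ i, C i * p.2 i) ^ 4

/-- The standard basis of `ℝ × ℝⁿ`, indexed by `Fin 1 ⊕ Fin n`. -/
def basisIJ (n : ℕ) : Fin 1 ⊕ Fin n → ℝ × (Fin n → ℝ) :=
  Sum.elim (fun _ => ((1 : ℝ), 0)) (fun i => ((0 : ℝ), Pi.single i 1))

/-- The Hessian matrix of a function `G : ℝ × ℝⁿ → ℝ` at a point `p`, in the
variables `(I,J)`: the matrix of the second Fréchet derivative in the standard basis. -/
def hessianIJ {n : ℕ} (G : ℝ × (Fin n → ℝ) → ℝ) (p : ℝ × (Fin n → ℝ)) :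
    Matrix (Fin 1 ⊕ Fin n) (Fin 1 ⊕ Fin n) ℝ :=
  Matrix.of fun i j => fderiv ℝ (fderiv ℝ G) p (basisIJ n i) (basisIJ n j)

/-- The gradient vector of `G` at `p`, in the standard basis of `ℝ × ℝⁿ`. -/
def gradIJ {n : ℕ} (G : ℝ × (Fin n → ℝ) → ℝ) (p : ℝ × (Fin n → ℝ)) :
    Fin 1 ⊕ Fin n → ℝ :=
  fun i => fderiv ℝ G p (basisIJ n i)

/-- The block matrix `A = [[−11/12, Cᵀ],[C, Idₙ − 2CCᵀ]]`. -/
def hessMat (n : ℕ) (C : Fin n → ℝ) : Matrix (Fin 1 ⊕ Fin n) (Fin 1 ⊕ Fin n) ℝ :=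
  Matrix.fromBlocks
    (Matrix.of fun _ _ => (-11 / 12 : ℝ))
    (Matrix.of fun _ j => C j)
    (Matrix.of fun i _ => C i)
    (1 - (2 : ℝ) • Matrix.vecMulVec C C)

/-- The bordered matrix `[[A, ω],[ωᵀ, 0]]` of a square matrix `A` and a vector `ω`. -/
def bordered {m : Type*} [Fintype m] [DecidableEq m]
    (A : Matrix m m ℝ) (ω : m → ℝ) : Matrix (m ⊕ Fin 1) (m ⊕ Fin 1) ℝ :=
  Matrix.fromBlocks A (Matrix.of fun i _ => ω i) (Matrix.of fun _ j => ω j) 0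

namespace Matrix

variable {m n R : Type*} [Fintype m] [Fintype n] [DecidableEq m] [DecidableEq n] [CommRing R]

theorem det_fromBlocks_of_mul_eq₁₂ {A : Matrix m m R} {B : Matrix m n R} {Y : Matrix m n R}
    (C : Matrix n m R) (D : Matrix n n R) (h : A * Y = B) :
    (fromBlocks A B C D).det = A.det * (D - C * Y).det := by
  have hmul : fromBlocks A B C D * fromBlocks 1 (-Y) 0 1 = fromBlocks A 0 C (D - C * Y) := by
    simp [fromBlocks_multiply, h, sub_eq_neg_add]
  simpa using congrArg det hmul

theorem det_fromBlocks_of_mul_eq₂₁ {C : Matrix n m R} {D : Matrix n n R} {Z : Matrix n m R}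
    (A : Matrix m m R) (B : Matrix m n R) (h : D * Z = C) :
    (fromBlocks A B C D).det = (A - B * Z).det * D.det := by
  have hmul : fromBlocks A B C D * fromBlocks 1 0 (-Z) 1 = fromBlocks (A - B * Z) B 0 D := by
    simp [fromBlocks_multiply, h, sub_eq_add_neg]
  simpa using congrArg det hmul

end Matrix

open Matrix

theorem det_bordered_of_mulVec_eq {m : Type*} [Fintype m] [DecidableEq m] {A : Matrix m m ℝ}
    {ω y : m → ℝ} (h : A *ᵥ y = ω) : (bordered A ω).det = -(A.det * (ω ⬝ᵥ y)) := by
  rw [bordered, det_fromBlocks_of_mul_eq₁₂ (Y := replicateCol (Fin 1) y) _ _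
    (by rw [← replicateCol_mulVec, h]; rfl)]
  simp [det_unique, mul_apply, dotProduct]

section HessMat

variable {n : ℕ} {C : Fin n → ℝ}

theorem householder_mulVec_self (hC : C ⬝ᵥ C = 1) :
    (1 - (2 : ℝ) • vecMulVec C C) *ᵥ C = -C := by
  ext i
  simp [sub_mulVec, smul_mulVec, vecMulVec_mulVec, hC]
  ring

theorem det_householder (hC : C ⬝ᵥ C = 1) : (1 - (2 : ℝ) • vecMulVec C C).det = -1 := by
  have hrankOne : 1 - (2 : ℝ) • vecMulVec C C
      = 1 + replicateCol (Fin 1) C * replicateRow (Fin 1) ((-2 : ℝ) • C) := by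
    ext i j
    simp [vecMulVec_apply, mul_apply]
    ring
  rw [hrankOne]
  refine (det_one_add_replicateCol_mul_replicateRow C _).trans ?_
  rw [smul_dotProduct, hC]
  norm_num

theorem hessMat_mulVec (hC : C ⬝ᵥ C = 1) :
    hessMat n C *ᵥ Sum.elim 0 C = Sum.elim (fun _ => 1) (-C) := by
  ext (i | i)
  · simpa [hessMat, fromBlocks_mulVec, mulVec, dotProduct] using hC
  · simpa [hessMat, fromBlocks_mulVec] using congrFun (householder_mulVec_self hC) i

theorem det_bordered_hessMat (hC : C ⬝ᵥ C = 1) :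
    (bordered (hessMat n C) (Sum.elim (fun _ => 1) (-C))).det = (hessMat n C).det := by
  rw [det_bordered_of_mulVec_eq (hessMat_mulVec hC)]
  simp [hC]

theorem det_hessMat (hC : C ⬝ᵥ C = 1) : (hessMat n C).det = -1 / 12 := by
  rw [hessMat, det_fromBlocks_of_mul_eq₂₁ (Z := replicateCol (Fin 1) (-C)) _ _ ?_,
    det_householder hC]
  · simp [det_unique, mul_apply, ← dotProduct.eq_1, hC]
    norm_num
  · rw [← replicateCol_mulVec, mulVec_neg, householder_mulVec_self hC, neg_neg]
    rfl

end HessMat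

open ContinuousLinearMap

def gcPoly (I a b : ℝ) : ℝ :=
  I * (1 - 11 / 24 * I + a + 3 / 2 * a ^ 2 - b / 2) - a - a ^ 2 + b / 2 + (b - 4 / 3 * a ^ 2) * a
    - b ^ 2 / 4 + 2 * a ^ 2 * b - 2 * a ^ 4

-- The partial derivatives of `gcPoly`.
def gcPolyDI (I a b : ℝ) : ℝ := 1 - 11 / 12 * I + a + 3 / 2 * a ^ 2 - b / 2

def gcPolyDa (I a b : ℝ) : ℝ :=
  I * (1 + 3 * a) - 1 - 2 * a + b - 4 * a ^ 2 + 4 * a * b - 8 * a ^ 3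

def gcPolyDb (I a b : ℝ) : ℝ := -I / 2 + 1 / 2 + a - b / 2 + 2 * a ^ 2

section ChainRule

variable {E : Type*} [NormedAddCommGroup E] [NormedSpace ℝ E] {u v w : E → ℝ}
  {u' v' w' : E →L[ℝ] ℝ} {x : E}

theorem HasFDerivAt.gcPoly (hu : HasFDerivAt u u' x) (hv : HasFDerivAt v v' x)
    (hw : HasFDerivAt w w' x) :
    HasFDerivAt (fun y => gcPoly (u y) (v y) (w y))
      (gcPolyDI (u x) (v x) (w x) • u' + gcPolyDa (u x) (v x) (w x) • v'
        + gcPolyDb (u x) (v x) (w x) • w') x := by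
  have h := (hu.mul (hu.const_mul (11 / 24) |>.const_sub 1 |>.add hv
    |>.add ((hv.pow 2).const_mul (3 / 2)) |>.sub (hw.const_mul (1 / 2)))).sub hv
    |>.sub (hv.pow 2) |>.add (hw.const_mul (1 / 2))
    |>.add ((hw.sub ((hv.pow 2).const_mul (4 / 3))).mul hv) |>.sub ((hw.pow 2).const_mul (1 / 4))
    |>.add (((hv.pow 2).const_mul 2).mul hw)
    |>.sub ((hv.pow 4).const_mul 2)
  refine (h.congr_fderiv ?_).congr_of_eventuallyEq (.of_forall fun y => ?_)
  · ext y
    simp [_root_.gcPolyDI, _root_.gcPolyDa, _root_.gcPolyDb]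
    ring
  · simp [_root_.gcPoly]
    ring

theorem HasFDerivAt.gcPolyDI (hu : HasFDerivAt u u' x) (hv : HasFDerivAt v v' x)
    (hw : HasFDerivAt w w' x) :
    HasFDerivAt (fun y => gcPolyDI (u y) (v y) (w y))
      (-(11 / 12 : ℝ) • u' + (1 + 3 * v x) • v' - (1 / 2 : ℝ) • w') x := by
  have h := hu.const_mul (11 / 12) |>.const_sub 1 |>.add hv |>.add ((hv.pow 2).const_mul (3 / 2))
    |>.sub (hw.const_mul (1 / 2))
  refine (h.congr_fderiv ?_).congr_of_eventuallyEq (.of_forall fun y => ?_)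
  · ext y
    simp
    ring
  · simp [_root_.gcPolyDI]
    ring

theorem HasFDerivAt.gcPolyDa (hu : HasFDerivAt u u' x) (hv : HasFDerivAt v v' x)
    (hw : HasFDerivAt w w' x) :
    HasFDerivAt (fun y => gcPolyDa (u y) (v y) (w y))
      ((1 + 3 * v x) • u' + (3 * u x - 2 - 8 * v x + 4 * w x - 24 * v x ^ 2) • v'
        + (1 + 4 * v x) • w') x := by
  have h := hu.mul ((hv.const_mul 3).const_add 1) |>.sub_const 1 |>.sub (hv.const_mul 2) |>.add hw
    |>.sub ((hv.pow 2).const_mul 4) |>.add ((hv.const_mul 4).mul hw) |>.sub ((hv.pow 3).const_mul 8)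
  refine (h.congr_fderiv ?_).congr_of_eventuallyEq (.of_forall fun y => ?_)
  · ext y
    simp
    ring
  · simp [_root_.gcPolyDa]

theorem HasFDerivAt.gcPolyDb (hu : HasFDerivAt u u' x) (hv : HasFDerivAt v v' x)
    (hw : HasFDerivAt w w' x) :
    HasFDerivAt (fun y => gcPolyDb (u y) (v y) (w y))
      (-(1 / 2 : ℝ) • u' + (1 + 4 * v x) • v' - (1 / 2 : ℝ) • w') x := by
  have h := hu.const_mul (1 / 2) |>.const_sub (1 / 2) |>.add hv |>.sub (hw.const_mul (1 / 2))
    |>.add ((hv.pow 2).const_mul 2)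
  refine (h.congr_fderiv ?_).congr_of_eventuallyEq (.of_forall fun y => ?_)
  · ext y
    simp
    ring
  · simp [_root_.gcPolyDb]
    ring

end ChainRule

section Gc

variable {n : ℕ}

def coordJ (i : Fin n) : (ℝ × (Fin n → ℝ)) →L[ℝ] ℝ :=
  (proj i).comp (snd ℝ ℝ (Fin n → ℝ))

def dotJ (c : Fin n → ℝ) : (ℝ × (Fin n → ℝ)) →L[ℝ] ℝ := ∑ i, c i • coordJ i

def gramJ : (ℝ × (Fin n → ℝ)) →L[ℝ] (ℝ × (Fin n → ℝ)) →L[ℝ] ℝ :=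
  ∑ i, (coordJ i).smulRight (coordJ i)

@[simp] theorem dotJ_apply (c : Fin n → ℝ) (p : ℝ × (Fin n → ℝ)) :
    dotJ c p = ∑ i, c i * p.2 i := by
  simp [dotJ, coordJ]

@[simp] theorem gramJ_apply (p : ℝ × (Fin n → ℝ)) : gramJ p = dotJ p.2 :=
  ext fun q => by simp [gramJ, coordJ]

theorem hasFDerivAt_sum_snd_sq (x : ℝ × (Fin n → ℝ)) :
    HasFDerivAt (fun p : ℝ × (Fin n → ℝ) => ∑ i, p.2 i ^ 2)
      (((2 : ℝ) • gramJ) x) x := by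
  have h := HasFDerivAt.fun_sum (u := Finset.univ) fun i _ =>
    ((coordJ i).hasFDerivAt (x := x)).pow 2
  refine h.congr_fderiv (ext fun q => ?_)
  simp [coordJ, Finset.mul_sum, mul_assoc]

variable (C : Fin n → ℝ)

theorem Gc_eq_gcPoly : Gc C = fun p => gcPoly p.1 (dotJ C p) (∑ i, p.2 i ^ 2) := by
  funext p
  simp [Gc, gcPoly]

def gcDeriv (x : ℝ × (Fin n → ℝ)) : (ℝ × (Fin n → ℝ)) →L[ℝ] ℝ :=
  gcPolyDI x.1 (dotJ C x) (∑ i, x.2 i ^ 2) • fst ℝ ℝ (Fin n → ℝ)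
    + gcPolyDa x.1 (dotJ C x) (∑ i, x.2 i ^ 2) • dotJ C
    + gcPolyDb x.1 (dotJ C x) (∑ i, x.2 i ^ 2) • ((2 : ℝ) • gramJ) x

def gcHessianZero : (ℝ × (Fin n → ℝ)) →L[ℝ] (ℝ × (Fin n → ℝ)) →L[ℝ] ℝ :=
  (-(11 / 12 : ℝ) • fst ℝ ℝ (Fin n → ℝ) + dotJ C).smulRight
      (fst ℝ ℝ (Fin n → ℝ))
    + (fst ℝ ℝ (Fin n → ℝ) - (2 : ℝ) • dotJ C).smulRight (dotJ C) + gramJ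

theorem hasFDerivAt_Gc (x : ℝ × (Fin n → ℝ)) : HasFDerivAt (Gc C) (gcDeriv C x) x := by
  rw [Gc_eq_gcPoly]
  exact hasFDerivAt_fst.gcPoly (dotJ C).hasFDerivAt (hasFDerivAt_sum_snd_sq x)

theorem fderiv_Gc : fderiv ℝ (Gc C) = gcDeriv C :=
  funext fun x => (hasFDerivAt_Gc C x).fderiv

theorem hasFDerivAt_gcDeriv_zero : HasFDerivAt (gcDeriv C) (gcHessianZero C) 0 := by
  have hI := hasFDerivAt_fst (𝕜 := ℝ) (p := (0 : ℝ × (Fin n → ℝ)))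
  have ha := (dotJ C).hasFDerivAt (x := 0)
  have hb := hasFDerivAt_sum_snd_sq (0 : ℝ × (Fin n → ℝ))
  have h := ((hI.gcPolyDI ha hb).smul_const (fst ℝ ℝ (Fin n → ℝ))).add
    ((hI.gcPolyDa ha hb).smul_const (dotJ C)) |>.add
    ((hI.gcPolyDb ha hb).smul ((2 : ℝ) • gramJ).hasFDerivAt)
  refine h.congr_fderiv (ext fun v => ext fun w => ?_)
  simp [gcHessianZero, gcPolyDb, sub_eq_add_neg]

theorem gradIJ_Gc : gradIJ (Gc C) (0, 0) = Sum.elim (fun _ => 1) (-C) := by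
  funext k
  rcases k with k | k <;>
    simp [gradIJ, fderiv_Gc, gcDeriv, basisIJ, gcPolyDI, gcPolyDa, gcPolyDb, Pi.single_apply]

theorem hessianIJ_Gc : hessianIJ (Gc C) (0, 0) = hessMat n C := by
  rw [hessianIJ, fderiv_Gc, Prod.mk_zero_zero, (hasFDerivAt_gcDeriv_zero C).fderiv]
  ext (i | i) (j | j) <;>
    simp [gcHessianZero, basisIJ, hessMat, Pi.single_apply, vecMulVec_apply, one_apply, neg_div,
      eq_comm]
  ring

end Gc

theorem Gc_gradient_hessian_nondegenerate
    (n : ℕ) (C : Fin n → ℝ) (hC : ∑ i, C i ^ 2 = 1) :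
    gradIJ (Gc C) (0, 0) = Sum.elim (fun _ => (1 : ℝ)) (fun i => -C i) ∧
    hessianIJ (Gc C) (0, 0) = hessMat n C ∧
    (hessianIJ (Gc C) (0, 0)).det = -1 / 12 ∧
    (bordered (hessianIJ (Gc C) (0, 0)) (gradIJ (Gc C) (0, 0))).det = -1 / 12 ∧
    IsUnit (hessianIJ (Gc C) (0, 0)) ∧
    IsUnit (bordered (hessianIJ (Gc C) (0, 0)) (gradIJ (Gc C) (0, 0))) := by
  have hunit : C ⬝ᵥ C = 1 := by simpa [dotProduct, sq] using hC
  have hdet := det_hessMat hunit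
  have hdetB := (det_bordered_hessMat hunit).trans hdet
  have hne : (-1 / 12 : ℝ) ≠ 0 := by norm_num
  rw [gradIJ_Gc, hessianIJ_Gc]
  refine ⟨rfl, rfl, hdet, hdetB, ?_, ?_⟩
  · rw [isUnit_iff_isUnit_det, hdet]
    exact hne.isUnit
  · rw [isUnit_iff_isUnit_det, hdetB]
    exact hne.isUnit

end
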